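/- arXiv:2002.07984 — 4 statements merged into one kernel-verified Lean document; each statement's English description precedes it below -/
import Mathlib

section
/- Let G be a finite simple graph and let G₁, G₂ be subgraphs of G with G = G₁ ∪ G₂ and V(G₁) ∩ V(G₂) = {x}. Let A ⊆ V(G), and define A₂ = A ∩ V(G₂), and A₁ as follows: if x ∈ A set A₁ = A ∩ V(G₁); if x ∉ A, assume additionally that A ∩ V(G₁) = ∅ and set A₁ = {x}. Suppose X₁ is A₁-good in G₁ and X₂ is A₂-good in G₂. Then X := (X₁ ∪ X₂ − {x}) ∪ (X₁ ∩ X₂) is A-good in G. Consequently, f(G; A) ≥ f(G₁; A₁) + f(G₂; A₂) − 1. -/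
/-- A set `W` of vertices is `A`-good in the graph `G` if every nonempty `S ⊆ W` with
`S − A ≠ ∅` contains a vertex `v ∈ S − A` with at most `3` neighbours (in `G`) in `S`. -/
def AGood {V : Type*} [Fintype V] (G : SimpleGraph V) (A W : Set V) : Prop :=
  ∀ S ⊆ W, (S \ A).Nonempty → ∃ v ∈ S \ A, {w | w ∈ S ∧ G.Adj v w}.ncard ≤ 3

/-- `fMax G A`: the maximum cardinality of an `A`-good subset of the vertices of `G`. -/
noncomputable def fMax {V : Type*} [Fintype V] (G : SimpleGraph V) (A : Set V) : ℕ :=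
  sSup {n | ∃ W : Set V, AGood G A W ∧ W.ncard = n}

/-- A set `W ⊆ V(H)` is `A`-good in a subgraph `H` of `G` if every nonempty `S ⊆ W` with
`S − A ≠ ∅` contains a vertex `v ∈ S − A` with at most `3` neighbours (in `H`) in `S`. -/
def AGoodSub {V : Type*} [Fintype V] {G : SimpleGraph V} (H : G.Subgraph) (A W : Set V) :
    Prop :=
  W ⊆ H.verts ∧
    ∀ S ⊆ W, (S \ A).Nonempty → ∃ v ∈ S \ A, {w | w ∈ S ∧ H.Adj v w}.ncard ≤ 3

/-- `fSub H A`: the maximum cardinality of an `A`-good subset of the vertices of the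
subgraph `H`. -/
noncomputable def fSub {V : Type*} [Fintype V] {G : SimpleGraph V} (H : G.Subgraph)
    (A : Set V) : ℕ :=
  sSup {n | ∃ W : Set V, AGoodSub H A W ∧ W.ncard = n}

lemma glue_good {V : Type*} [Fintype V] (G : SimpleGraph V) (H₁ H₂ : G.Subgraph)
    (hunion : H₁ ⊔ H₂ = ⊤) (x : V) (hinter : H₁.verts ∩ H₂.verts = {x})
    (A A₁ A₂ : Set V)
    (hA₂ : A₂ = A ∩ H₂.verts)
    (hA₁ : (x ∈ A ∧ A₁ = A ∩ H₁.verts) ∨ (x ∉ A ∧ A ∩ H₁.verts = ∅ ∧ A₁ = {x}))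
    (X₁ X₂ : Set V) (hX₁ : AGoodSub H₁ A₁ X₁) (hX₂ : AGoodSub H₂ A₂ X₂) :
    AGood G A ((X₁ ∪ X₂) \ {x} ∪ X₁ ∩ X₂) := by
  have hadj : ∀ a b, G.Adj a b ↔ H₁.Adj a b ∨ H₂.Adj a b := by
    intro a b
    have h := SimpleGraph.Subgraph.top_adj (G := G) (a := a) (b := b)
    rw [← hunion, SimpleGraph.Subgraph.sup_adj] at h
    exact h.symm
  intro S hS hSA
  have hxX : x ∈ (X₁ ∪ X₂) \ {x} ∪ X₁ ∩ X₂ → x ∈ X₁ ∩ X₂ := by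
    intro hx
    rcases hx with h | h
    · exact absurd rfl h.2
    · exact h
  have hunionmem : ∀ w ∈ S, w ∈ X₁ ∪ X₂ := by
    intro w hw
    rcases hS hw with h | h
    · exact h.1
    · exact Or.inl h.1
  have hm1 : ∀ w ∈ S, w ∈ H₁.verts → w ∈ X₁ := by
    intro w hw hw1
    rcases hunionmem w hw with h | h
    · exact h
    · have hwx : w = x := by
        have : w ∈ H₁.verts ∩ H₂.verts := ⟨hw1, hX₂.1 h⟩
        rwa [hinter] at this
      subst hwx
      exact (hxX (hS hw)).1
  have hm2 : ∀ w ∈ S, w ∈ H₂.verts → w ∈ X₂ := by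
    intro w hw hw2
    rcases hunionmem w hw with h | h
    · have hwx : w = x := by
        have : w ∈ H₁.verts ∩ H₂.verts := ⟨hX₁.1 h, hw2⟩
        rwa [hinter] at this
      subst hwx
      exact (hxX (hS hw)).2
    · exact h
  by_cases hc : ((S ∩ X₁) \ A₁).Nonempty
  · obtain ⟨v, hv, hle⟩ := hX₁.2 (S ∩ X₁) Set.inter_subset_right hc
    have hv1 : v ∈ H₁.verts := hX₁.1 hv.1.2
    have hvA : v ∉ A := by
      rcases hA₁ with ⟨hxA, rfl⟩ | ⟨hxA, hemp, rfl⟩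
      · exact fun h => hv.2 ⟨h, hv1⟩
      · intro h
        have : v ∈ A ∩ H₁.verts := ⟨h, hv1⟩
        rw [hemp] at this
        exact this
    have hvx : v ≠ x := by
      rcases hA₁ with ⟨hxA, rfl⟩ | ⟨hxA, hemp, rfl⟩
      · rintro rfl; exact hvA hxA
      · exact fun h => hv.2 h
    have hv2 : v ∉ H₂.verts := by
      intro h
      have : v ∈ H₁.verts ∩ H₂.verts := ⟨hv1, h⟩
      rw [hinter] at this
      exact hvx this
    refine ⟨v, ⟨hv.1.1, hvA⟩, le_trans (Set.ncard_le_ncard ?_ (Set.toFinite _)) hle⟩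
    rintro w ⟨hwS, hwadj⟩
    have hH1 : H₁.Adj v w := by
      rcases (hadj v w).1 hwadj with h | h
      · exact h
      · exact absurd h.fst_mem hv2
    exact ⟨⟨hwS, hm1 w hwS hH1.snd_mem⟩, hH1⟩
  · have hSX₁A : S ∩ X₁ ⊆ A₁ := by
      intro w hw
      by_contra hna
      exact hc ⟨w, hw, hna⟩
    rcases hA₁ with ⟨hxA, hA1eq⟩ | ⟨hxA, hemp, hA1eq⟩
    · -- case x ∈ A
      have hne : ((S ∩ X₂) \ A₂).Nonempty := by
        obtain ⟨u, huS, huA⟩ := hSA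
        have huX₂ : u ∈ X₂ := by
          rcases hunionmem u huS with h | h
          · exact absurd (hSX₁A ⟨huS, h⟩) (by rw [hA1eq]; exact fun hh => huA hh.1)
          · exact h
        exact ⟨u, ⟨huS, huX₂⟩, by rw [hA₂]; exact fun hh => huA hh.1⟩
      obtain ⟨v, hv, hle⟩ := hX₂.2 (S ∩ X₂) Set.inter_subset_right hne
      have hv2 : v ∈ H₂.verts := hX₂.1 hv.1.2
      have hvA : v ∉ A := by
        intro h
        exact hv.2 (by rw [hA₂]; exact ⟨h, hv2⟩)
      have hvx : v ≠ x := by rintro rfl; exact hvA hxA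
      have hv1 : v ∉ H₁.verts := by
        intro h
        have : v ∈ H₁.verts ∩ H₂.verts := ⟨h, hv2⟩
        rw [hinter] at this
        exact hvx this
      refine ⟨v, ⟨hv.1.1, hvA⟩, le_trans (Set.ncard_le_ncard ?_ (Set.toFinite _)) hle⟩
      rintro w ⟨hwS, hwadj⟩
      have hH2 : H₂.Adj v w := by
        rcases (hadj v w).1 hwadj with h | h
        · exact absurd h.fst_mem hv1
        · exact h
      exact ⟨⟨hwS, hm2 w hwS hH2.snd_mem⟩, hH2⟩
    · -- case x ∉ A, A₁ = {x}
      have hSX₂ : S ⊆ X₂ := by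
        intro w hw
        rcases hunionmem w hw with h | h
        · have hwm := hSX₁A ⟨hw, h⟩
          rw [hA1eq] at hwm
          subst hwm
          exact (hxX (hS hw)).2
        · exact h
      have hne : (S \ A₂).Nonempty := by
        obtain ⟨u, huS, huA⟩ := hSA
        exact ⟨u, huS, by rw [hA₂]; exact fun hh => huA hh.1⟩
      obtain ⟨v, hv, hle⟩ := hX₂.2 S hSX₂ hne
      have hv2 : v ∈ H₂.verts := hX₂.1 (hSX₂ hv.1)
      have hvA : v ∉ A := fun h => hv.2 (by rw [hA₂]; exact ⟨h, hv2⟩)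
      refine ⟨v, ⟨hv.1, hvA⟩, le_trans (Set.ncard_le_ncard ?_ (Set.toFinite _)) hle⟩
      rintro w ⟨hwS, hwadj⟩
      have hH2 : H₂.Adj v w := by
        rcases (hadj v w).1 hwadj with h | h
        · -- H₁-edge: both endpoints in H₁.verts ∩ H₂.verts, contradiction with v ≠ w
          have hw2 : w ∈ H₂.verts := hX₂.1 (hSX₂ hwS)
          have hwx : w = x := by
            have : w ∈ H₁.verts ∩ H₂.verts := ⟨h.snd_mem, hw2⟩
            rwa [hinter] at this
          have hvx : v = x := by
            have : v ∈ H₁.verts ∩ H₂.verts := ⟨h.fst_mem, hv2⟩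
            rwa [hinter] at this
          exact absurd (hvx.trans hwx.symm) h.ne
        · exact h
      exact ⟨hwS, hH2⟩

lemma bdd_aux {V : Type*} [Fintype V] (P : Set V → Prop) :
    BddAbove {n | ∃ W : Set V, P W ∧ W.ncard = n} := by
  refine ⟨Fintype.card V, ?_⟩
  rintro n ⟨W, -, rfl⟩
  calc W.ncard ≤ (Set.univ : Set V).ncard :=
        Set.ncard_le_ncard (Set.subset_univ _) (Set.toFinite _)
    _ = Fintype.card V := by rw [Set.ncard_univ, Nat.card_eq_fintype_card]

lemma fSub_mem {V : Type*} [Fintype V] {G : SimpleGraph V} (H : G.Subgraph) (A : Set V) :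
    ∃ W : Set V, AGoodSub H A W ∧ W.ncard = fSub H A := by
  have : fSub H A ∈ {n | ∃ W : Set V, AGoodSub H A W ∧ W.ncard = n} := by
    apply Nat.sSup_mem
    · refine ⟨0, ∅, ⟨Set.empty_subset _, fun S hS hne => ?_⟩, Set.ncard_empty _⟩
      rw [Set.subset_empty_iff] at hS
      subst hS
      simp at hne
    · exact bdd_aux _
  exact this


/-- Gluing two `A_i`-good sets along a single common vertex `x` produces
an `A`-good set; consequently `f(G;A) ≥ f(G₁;A₁) + f(G₂;A₂) − 1`. -/
theorem stmt3 {V : Type*} [Fintype V] (G : SimpleGraph V) (H₁ H₂ : G.Subgraph)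
    (hunion : H₁ ⊔ H₂ = ⊤) (x : V) (hinter : H₁.verts ∩ H₂.verts = {x})
    (A A₁ A₂ : Set V)
    (hA₂ : A₂ = A ∩ H₂.verts)
    (hA₁ : (x ∈ A ∧ A₁ = A ∩ H₁.verts) ∨ (x ∉ A ∧ A ∩ H₁.verts = ∅ ∧ A₁ = {x}))
    (X₁ X₂ : Set V) (hX₁ : AGoodSub H₁ A₁ X₁) (hX₂ : AGoodSub H₂ A₂ X₂) :
    AGood G A ((X₁ ∪ X₂) \ {x} ∪ X₁ ∩ X₂) ∧
      fMax G A ≥ fSub H₁ A₁ + fSub H₂ A₂ - 1 := by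
  refine ⟨glue_good G H₁ H₂ hunion x hinter A A₁ A₂ hA₂ hA₁ X₁ X₂ hX₁ hX₂, ?_⟩
  obtain ⟨W₁, hW₁, hn₁⟩ := fSub_mem H₁ A₁
  obtain ⟨W₂, hW₂, hn₂⟩ := fSub_mem H₂ A₂
  have hgood := glue_good G H₁ H₂ hunion x hinter A A₁ A₂ hA₂ hA₁ W₁ W₂ hW₁ hW₂
  set X := (W₁ ∪ W₂) \ {x} ∪ W₁ ∩ W₂ with hXdef
  have hXle : X.ncard ≤ fMax G A := le_csSup (bdd_aux _) ⟨X, hgood, rfl⟩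
  have hsub : W₁ ∩ W₂ ⊆ {x} := by
    rw [← hinter]; exact Set.inter_subset_inter hW₁.1 hW₂.1
  have huni : (W₁ ∪ W₂).ncard + (W₁ ∩ W₂).ncard = W₁.ncard + W₂.ncard :=
    Set.ncard_union_add_ncard_inter _ _
  have hcard : W₁.ncard + W₂.ncard ≤ X.ncard + 1 := by
    by_cases hx : x ∈ W₁ ∩ W₂
    · have hXeq : X = W₁ ∪ W₂ := by
        rw [hXdef]
        apply Set.Subset.antisymm
        · rintro w (h | h)
          · exact h.1
          · exact Or.inl h.1
        · intro w hw
          by_cases hwx : w = x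
          · subst hwx; exact Or.inr hx
          · exact Or.inl ⟨hw, hwx⟩
      have hi : (W₁ ∩ W₂).ncard = 1 := by
        have : W₁ ∩ W₂ = {x} :=
          Set.Subset.antisymm hsub (Set.singleton_subset_iff.2 hx)
        rw [this, Set.ncard_singleton]
      rw [hXeq]
      omega
    · have hi0 : (W₁ ∩ W₂) = ∅ := by
        rw [Set.eq_empty_iff_forall_notMem]
        intro w hw
        have := hsub hw
        rw [Set.mem_singleton_iff] at this
        subst this
        exact hx hw
      have hsubset : W₁ ∪ W₂ ⊆ X ∪ {x} := by
        intro w hw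
        by_cases hwx : w = x
        · exact Or.inr hwx
        · exact Or.inl (Or.inl ⟨hw, hwx⟩)
      have h2 : (W₁ ∪ W₂).ncard ≤ (X ∪ {x}).ncard :=
        Set.ncard_le_ncard hsubset (Set.toFinite _)
      have h3 : (X ∪ {x} : Set V).ncard ≤ X.ncard + 1 := by
        refine le_trans (Set.ncard_union_le _ _) ?_
        simp
      rw [hi0] at huni
      simp at huni
      omega
  omega
end

section
/- Let G be a finite simple graph and let G₁, G₂ be subgraphs of G with G = G₁ ∪ G₂, V(G₁) ∩ V(G₂) = {x, y}, and xy an edge of both G₁ and G₂. Let A ⊆ V(G₂). Suppose X₁ is {x,y}-good in G₁ and X₂ is A-good in G₂. Then X := (X₁ ∪ X₂ − {x, y}) ∪ (X₁ ∩ X₂) is A-good in G. Consequently, f(G; A) ≥ f(G₁; {x,y}) + f(G₂; A) − 2. -/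
lemma glueGood {V : Type*} [Fintype V] (G : SimpleGraph V) (H₁ H₂ : G.Subgraph)
    (hunion : H₁ ⊔ H₂ = ⊤) (x y : V) (hinter : H₁.verts ∩ H₂.verts = {x, y})
    (hedge₂ : H₂.Adj x y)
    (A : Set V) (hA : A ⊆ H₂.verts)
    (X₁ X₂ : Set V) (hX₁ : AGoodSub H₁ {x, y} X₁) (hX₂ : AGoodSub H₂ A X₂) :
    AGood G A ((X₁ ∪ X₂) \ {x, y} ∪ X₁ ∩ X₂) := by
  have hadj : ∀ v w, G.Adj v w ↔ H₁.Adj v w ∨ H₂.Adj v w := by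
    intro v w
    rw [← SimpleGraph.Subgraph.top_adj (G := G), ← hunion, SimpleGraph.Subgraph.sup_adj]
  intro S hS hne
  by_cases hc : ((S ∩ H₁.verts) \ {x, y}).Nonempty
  · -- use X₁
    have hsub : S ∩ H₁.verts ⊆ X₁ := by
      rintro w ⟨hwS, hw1⟩
      rcases hS hwS with ⟨hw, hwxy⟩ | ⟨hw, _⟩
      · rcases hw with hw | hw
        · exact hw
        · exact absurd (hinter ▸ ⟨hw1, hX₂.1 hw⟩) hwxy
      · exact hw
    obtain ⟨v, ⟨⟨hvS, hv1⟩, hvxy⟩, hcard⟩ := hX₁.2 _ hsub hc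
    have hvA : v ∉ A := fun h => hvxy (hinter ▸ ⟨hv1, hA h⟩)
    refine ⟨v, ⟨hvS, hvA⟩, le_trans (Set.ncard_le_ncard ?_ (Set.toFinite _)) hcard⟩
    rintro w ⟨hwS, hadjw⟩
    rcases (hadj v w).1 hadjw with h | h
    · exact ⟨⟨hwS, h.snd_mem⟩, h⟩
    · exact absurd (hinter ▸ ⟨hv1, h.fst_mem⟩) hvxy
  · -- use X₂
    have hS1 : S ∩ H₁.verts ⊆ {x, y} := by
      intro w hw
      by_contra h
      exact hc ⟨w, hw, h⟩
    have hsub : S ∩ H₂.verts ⊆ X₂ := by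
      rintro w ⟨hwS, hw2⟩
      rcases hS hwS with ⟨hw, hwxy⟩ | ⟨_, hw⟩
      · rcases hw with hw | hw
        · exact absurd (hinter ▸ ⟨hX₁.1 hw, hw2⟩) hwxy
        · exact hw
      · exact hw
    have hne2 : ((S ∩ H₂.verts) \ A).Nonempty := by
      obtain ⟨u, huS, huA⟩ := hne
      refine ⟨u, ⟨huS, ?_⟩, huA⟩
      rcases hS huS with ⟨hu, huxy⟩ | ⟨_, hu⟩
      · rcases hu with hu | hu
        · exact absurd (hS1 ⟨huS, hX₁.1 hu⟩) huxy
        · exact hX₂.1 hu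
      · exact hX₂.1 hu
    obtain ⟨v, ⟨⟨hvS, hv2⟩, hvA⟩, hcard⟩ := hX₂.2 _ hsub hne2
    refine ⟨v, ⟨hvS, hvA⟩, le_trans (Set.ncard_le_ncard ?_ (Set.toFinite _)) hcard⟩
    rintro w ⟨hwS, hadjw⟩
    rcases (hadj v w).1 hadjw with h | h
    · have hvxy : v ∈ ({x, y} : Set V) := hinter ▸ ⟨h.fst_mem, hv2⟩
      have hwxy : w ∈ ({x, y} : Set V) := hS1 ⟨hwS, h.snd_mem⟩
      have hvw : v ≠ w := h.ne
      have h2 : H₂.Adj v w := by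
        rcases hvxy with rfl | rfl <;> rcases hwxy with rfl | rfl
        · exact absurd rfl hvw
        · exact hedge₂
        · exact hedge₂.symm
        · exact absurd rfl hvw
      exact ⟨⟨hwS, h2.snd_mem⟩, h2⟩
    · exact ⟨⟨hwS, h.snd_mem⟩, h⟩

/-- Gluing an `{x,y}`-good set of `G₁` and an `A`-good set of `G₂` along
a common edge `xy` produces an `A`-good set; consequently
`f(G;A) ≥ f(G₁;{x,y}) + f(G₂;A) − 2`. -/
theorem stmt4 {V : Type*} [Fintype V] (G : SimpleGraph V) (H₁ H₂ : G.Subgraph)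
    (hunion : H₁ ⊔ H₂ = ⊤) (x y : V) (hinter : H₁.verts ∩ H₂.verts = {x, y})
    (hedge₁ : H₁.Adj x y) (hedge₂ : H₂.Adj x y)
    (A : Set V) (hA : A ⊆ H₂.verts)
    (X₁ X₂ : Set V) (hX₁ : AGoodSub H₁ {x, y} X₁) (hX₂ : AGoodSub H₂ A X₂) :
    AGood G A ((X₁ ∪ X₂) \ {x, y} ∪ X₁ ∩ X₂) ∧
      fMax G A ≥ fSub H₁ {x, y} + fSub H₂ A - 2 := by
  have hgood := glueGood G H₁ H₂ hunion x y hinter hedge₂ A hA X₁ X₂ hX₁ hX₂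
  refine ⟨hgood, ?_⟩
  -- boundedness of the sSup sets
  have hbddG : BddAbove {n | ∃ W : Set V, AGood G A W ∧ W.ncard = n} := by
    refine ⟨Fintype.card V, ?_⟩
    rintro n ⟨W, _, rfl⟩
    simpa [Set.ncard_univ] using Set.ncard_le_ncard (Set.subset_univ W) (Set.toFinite _)
  have hbddS : ∀ (H : G.Subgraph) (B : Set V),
      BddAbove {n | ∃ W : Set V, AGoodSub H B W ∧ W.ncard = n} := by
    intro H B
    refine ⟨Fintype.card V, ?_⟩
    rintro n ⟨W, _, rfl⟩
    simpa [Set.ncard_univ] using Set.ncard_le_ncard (Set.subset_univ W) (Set.toFinite _)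
  have hneS : ∀ (H : G.Subgraph) (B : Set V),
      {n | ∃ W : Set V, AGoodSub H B W ∧ W.ncard = n}.Nonempty := by
    intro H B
    refine ⟨0, ∅, ⟨Set.empty_subset _, ?_⟩, Set.ncard_empty _⟩
    intro S hS hne
    rw [Set.subset_empty_iff.1 hS] at hne
    simp at hne
  obtain ⟨W₁, hW₁, hW₁c⟩ := Nat.sSup_mem (hneS H₁ {x, y}) (hbddS H₁ {x, y})
  obtain ⟨W₂, hW₂, hW₂c⟩ := Nat.sSup_mem (hneS H₂ A) (hbddS H₂ A)
  have hgood' := glueGood G H₁ H₂ hunion x y hinter hedge₂ A hA W₁ W₂ hW₁ hW₂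
  set X : Set V := (W₁ ∪ W₂) \ {x, y} ∪ W₁ ∩ W₂ with hXdef
  have hle : fMax G A ≥ X.ncard := le_csSup hbddG ⟨X, hgood', rfl⟩
  -- cardinality estimate
  have hdisj : Disjoint ((W₁ ∪ W₂) \ {x, y}) (W₁ ∩ W₂) := by
    have hsub12 : W₁ ∩ W₂ ⊆ {x, y} := by
      rw [← hinter]; exact Set.inter_subset_inter hW₁.1 hW₂.1
    exact Set.disjoint_of_subset_right hsub12 (Set.disjoint_sdiff_left)
  have h1 : X.ncard = ((W₁ ∪ W₂) \ {x, y}).ncard + (W₁ ∩ W₂).ncard :=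
    Set.ncard_union_eq hdisj (Set.toFinite _) (Set.toFinite _)
  have h2 : (W₁ ∪ W₂).ncard + (W₁ ∩ W₂).ncard = W₁.ncard + W₂.ncard :=
    Set.ncard_union_add_ncard_inter W₁ W₂ (Set.toFinite _) (Set.toFinite _)
  have h3 : (W₁ ∪ W₂).ncard ≤ ((W₁ ∪ W₂) \ {x, y}).ncard + 2 := by
    have : W₁ ∪ W₂ ⊆ ((W₁ ∪ W₂) \ {x, y}) ∪ {x, y} := by
      intro w hw
      by_cases h : w ∈ ({x, y} : Set V)
      · exact Or.inr h
      · exact Or.inl ⟨hw, h⟩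
    calc (W₁ ∪ W₂).ncard ≤ (((W₁ ∪ W₂) \ {x, y}) ∪ {x, y}).ncard :=
          Set.ncard_le_ncard this (Set.toFinite _)
      _ ≤ ((W₁ ∪ W₂) \ {x, y}).ncard + ({x, y} : Set V).ncard :=
          Set.ncard_union_le _ _
      _ ≤ ((W₁ ∪ W₂) \ {x, y}).ncard + 2 := by
          have := Set.ncard_insert_le x ({y} : Set V)
          simp only [Set.ncard_singleton] at this
          omega
  have hfsub₁ : fSub H₁ {x, y} = W₁.ncard := hW₁c.symm
  have hfsub₂ : fSub H₂ A = W₂.ncard := hW₂c.symm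
  rw [hfsub₁, hfsub₂]
  omega
end

section
/- Let G be a finite simple graph and let v₀v₁⋯v_k be a path in G such that for each i with 0 < i < k, there is no path from v_{i−1} to v_{i+1} in the graph G − v_i (i.e., v_{i−1} and v_{i+1} lie in different connected components of G − v_i). Then every vertex u of G has at most 2 neighbours in the set {v₀, v₁, …, v_k}. -/
/-!
If `u` were adjacent to `v_a`, `v_b` and `v_c` with `a < b < c`, then
`v_{b-1} ⋯ v_a u v_c ⋯ v_{b+1}` would be a walk from `v_{b-1}` to `v_{b+1}` avoiding `v_b`,
because the vertices of the path are distinct.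
-/

open SimpleGraph

theorem Set.exists_lt_lt_of_two_lt_ncard {α : Type*} [LinearOrder α] {s : Set α}
    (hs : 2 < s.ncard) : ∃ a ∈ s, ∃ b ∈ s, ∃ c ∈ s, a < b ∧ b < c := by
  have hfin : s.Finite := Set.finite_of_ncard_pos (by omega)
  rw [Set.ncard_eq_toFinset_card s hfin] at hs
  let f := hfin.toFinset.orderEmbOfFin rfl
  have hf (i : Fin _) : f i ∈ s := hfin.mem_toFinset.mp (Finset.orderEmbOfFin_mem _ rfl i)
  exact ⟨f ⟨0, by omega⟩, hf _, f ⟨1, by omega⟩, hf _, f ⟨2, by omega⟩, hf _,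
    f.strictMono (by simp [Fin.lt_def]), f.strictMono (by simp [Fin.lt_def])⟩

namespace SimpleGraph

variable {V : Type*} {G : SimpleGraph V}

theorem exists_walk_head_support_subset_of_isChain :
    ∀ {l : List V}, l.IsChain G.Adj → ∀ (hne : l ≠ []) {y : V}, y ∈ l →
      ∃ p : G.Walk (l.head hne) y, p.support ⊆ l
  | [x], _, _, y, hy => by
    obtain rfl : y = x := List.mem_singleton.mp hy
    exact ⟨Walk.nil, by simp⟩
  | x :: x' :: t, hl, _, y, hy => by
    rcases List.mem_cons.mp hy with rfl | hy
    · exact ⟨Walk.nil, by simp⟩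
    · obtain ⟨p, hp⟩ := exists_walk_head_support_subset_of_isChain hl.of_cons (by simp) hy
      exact ⟨Walk.cons hl.rel p, List.cons_subset_cons x hp⟩

theorem exists_walk_support_subset_of_isChain {l : List V} (hl : l.IsChain G.Adj)
    {x y : V} (hx : x ∈ l) (hy : y ∈ l) : ∃ p : G.Walk x y, p.support ⊆ l := by
  have hne : l ≠ [] := List.ne_nil_of_mem hx
  obtain ⟨p, hp⟩ := exists_walk_head_support_subset_of_isChain hl hne hx
  obtain ⟨q, hq⟩ := exists_walk_head_support_subset_of_isChain hl hne hy
  refine ⟨p.reverse.append q, fun z hz => ?_⟩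
  rw [Walk.mem_support_append_iff, Walk.support_reverse, List.mem_reverse] at hz
  exact hz.elim (hp ·) (hq ·)

theorem exists_walk_notMem_support_of_adj {l₁ l₂ : List V} (h₁ : l₁.IsChain G.Adj)
    (h₂ : l₂.IsChain G.Adj) {u v x x' y y' : V} (hv₁ : v ∉ l₁) (hv₂ : v ∉ l₂) (huv : u ≠ v)
    (hx : x ∈ l₁) (hx' : x' ∈ l₁) (hy : y ∈ l₂) (hy' : y' ∈ l₂)
    (hux : G.Adj u x) (huy : G.Adj u y) : ∃ p : G.Walk x' y', v ∉ p.support := by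
  obtain ⟨p, hp⟩ := exists_walk_support_subset_of_isChain h₁ hx' hx
  obtain ⟨q, hq⟩ := exists_walk_support_subset_of_isChain h₂ hy hy'
  refine ⟨p.append (.cons hux.symm (.cons huy q)), fun hv => ?_⟩
  simp only [Walk.mem_support_append_iff, Walk.support_cons, List.mem_cons] at hv
  rcases hv with hv | rfl | rfl | hv
  · exact hv₁ (hp hv)
  · exact hv₁ hx
  · exact huv rfl
  · exact hv₂ (hq hv)

theorem exists_walk_notMem_support_of_three_adj {l : List V} (hl : l.IsChain G.Adj)
    (hnodup : l.Nodup) {u : V} {a b c : ℕ} (hab : a < b) (hbc : b < c) (hc : c < l.length)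
    (hua : G.Adj u l[a]) (hub : G.Adj u l[b]) (huc : G.Adj u l[c]) :
    ∃ p : G.Walk l[b - 1] l[b + 1], l[b] ∉ p.support := by
  have hsplit : l = l.take b ++ l[b] :: l.drop (b + 1) := by
    rw [← List.drop_eq_getElem_cons, List.take_append_drop]
  have hb : l[b] ∉ l.take b ++ l.drop (b + 1) :=
    (List.nodup_cons.mp (List.nodup_middle.mp (hsplit ▸ hnodup))).1
  rw [List.mem_append, not_or] at hb
  have mem_take {i : ℕ} (hi : i < b) : l[i] ∈ l.take b :=
    List.mem_take_iff_getElem.mpr ⟨i, by omega, rfl⟩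
  have mem_drop {i : ℕ} (hi : b < i) (hil : i < l.length) : l[i] ∈ l.drop (b + 1) :=
    List.mem_drop_iff_getElem.mpr ⟨i - (b + 1), by omega, by congr 1; omega⟩
  exact exists_walk_notMem_support_of_adj (hl.take b) (hl.drop (b + 1)) hb.1 hb.2 hub.ne
    (mem_take hab) (mem_take (by omega)) (mem_drop hbc hc) (mem_drop (by omega) (by omega))
    hua huc

end SimpleGraph

/-- Let `v₀v₁⋯v_k` be a path in a finite simple graph `G` such that for
each `0 < i < k` there is no path from `v_{i−1}` to `v_{i+1}` in `G − v_i` (equivalently,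
every walk from `v_{i−1}` to `v_{i+1}` in `G` passes through `v_i`). Then every vertex of
`G` has at most `2` neighbours in `{v₀, …, v_k}`. -/
theorem stmt5 {V : Type*} (G : SimpleGraph V) (l : List V)
    (hchain : l.Chain' G.Adj) (hnodup : l.Nodup)
    (hsep : ∀ i : ℕ, 0 < i → ∀ hi : i + 1 < l.length,
      ∀ q : G.Walk (l.get ⟨i - 1, by omega⟩) (l.get ⟨i + 1, hi⟩),
        l.get ⟨i, by omega⟩ ∈ q.support) :
    ∀ u : V, {w | w ∈ l ∧ G.Adj u w}.ncard ≤ 2 := by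
  intro u
  have himage : {w | w ∈ l ∧ G.Adj u w} = l.get '' {i | G.Adj u (l.get i)} := by
    ext w
    simp only [Set.mem_ofPred_eq, Set.mem_image, List.mem_iff_get]
    grind
  rw [himage]
  refine (Set.ncard_image_le (Set.toFinite _)).trans (not_lt.mp fun h => ?_)
  obtain ⟨a, ha, b, hb, c, hc, hab, hbc⟩ := Set.exists_lt_lt_of_two_lt_ncard h
  obtain ⟨p, hp⟩ := exists_walk_notMem_support_of_three_adj hchain hnodup hab hbc c.isLt ha hb hc
  exact hp (hsep b (by omega) (by omega) p)
end

section
/- Every finite simple 5-degenerate graph G admits a partition of its vertex set into two sets V₁ and V₂ such that the induced subgraphs G[V₁] and G[V₂] are both 2-degenerate. -/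
/-- A set is "good" for `G` if every nonempty subset has a vertex with ≤ 2 neighbours. -/
private def stmt10Good {V : Type*} (G : SimpleGraph V) (A : Set V) : Prop :=
  ∀ S ⊆ A, S.Nonempty → ∃ v ∈ S, {w | w ∈ S ∧ G.Adj v w}.ncard ≤ 2

private lemma stmt10Good_empty {V : Type*} (G : SimpleGraph V) : stmt10Good G ∅ := by
  intro S hS hne
  rcases hne with ⟨x, hx⟩
  exact absurd (hS hx) (by simp)

private lemma stmt10Good_insert {V : Type*} [Fintype V] (G : SimpleGraph V) {A : Set V}
    {v : V} (hA : stmt10Good G A) (hv : {w | w ∈ A ∧ G.Adj v w}.ncard ≤ 2) :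
    stmt10Good G (insert v A) := by
  intro S hS hne
  by_cases hvS : v ∈ S
  · refine ⟨v, hvS, le_trans (Set.ncard_le_ncard ?_ (Set.toFinite _)) hv⟩
    rintro w ⟨hwS, hadj⟩
    rcases hS hwS with h | h
    · exact absurd (h ▸ hadj) (G.irrefl)
    · exact ⟨h, hadj⟩
  · refine hA S ?_ hne
    intro w hw
    rcases hS hw with h | h
    · exact absurd (h ▸ hw) hvS
    · exact h

private lemma stmt10_main {V : Type*} [Fintype V] (G : SimpleGraph V)
    (h5 : ∀ S : Set V, S.Nonempty → ∃ v ∈ S, {w | w ∈ S ∧ G.Adj v w}.ncard ≤ 5) :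
    ∀ n : ℕ, ∀ S : Set V, S.ncard ≤ n →
      ∃ A B : Set V, A ∪ B = S ∧ A ∩ B = ∅ ∧ stmt10Good G A ∧ stmt10Good G B := by
  intro n
  induction n with
  | zero =>
    intro S hS
    have : S = ∅ := by
      rw [← Set.ncard_eq_zero (Set.toFinite S)]; omega
    exact ⟨∅, ∅, by simp [this], by simp, stmt10Good_empty G, stmt10Good_empty G⟩
  | succ n ih =>
    intro S hS
    rcases Set.eq_empty_or_nonempty S with rfl | hne
    · exact ⟨∅, ∅, by simp, by simp, stmt10Good_empty G, stmt10Good_empty G⟩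
    · obtain ⟨v, hvS, hdeg⟩ := h5 S hne
      set S' := S \ {v} with hS'
      have hcard : S'.ncard ≤ n := by
        have h1 : S'.ncard < S.ncard :=
          Set.ncard_lt_ncard (by rw [hS']; exact ⟨Set.diff_subset, fun h => (h hvS).2 rfl⟩)
            (Set.toFinite S)
        omega
      obtain ⟨A, B, hAB, hABd, hGA, hGB⟩ := ih S' hcard
      -- the neighbours of v in S split into neighbours in A and in B
      have hvA : v ∉ A := fun h => by
        have : v ∈ S' := hAB ▸ Set.mem_union_left _ h
        simp [hS'] at this
      have hvB : v ∉ B := fun h => by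
        have : v ∈ S' := hAB ▸ Set.mem_union_right _ h
        simp [hS'] at this
      have hsplit : {w | w ∈ A ∧ G.Adj v w} ∪ {w | w ∈ B ∧ G.Adj v w}
          ⊆ {w | w ∈ S ∧ G.Adj v w} := by
        rintro w (⟨hw, ha⟩ | ⟨hw, ha⟩)
        · exact ⟨(hAB ▸ Set.mem_union_left _ hw : w ∈ S').1, ha⟩
        · exact ⟨(hAB ▸ Set.mem_union_right _ hw : w ∈ S').1, ha⟩
      have hdisj : Disjoint {w | w ∈ A ∧ G.Adj v w} {w | w ∈ B ∧ G.Adj v w} := by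
        rw [Set.disjoint_left]
        rintro w ⟨hwA, -⟩ ⟨hwB, -⟩
        have : w ∈ A ∩ B := ⟨hwA, hwB⟩
        simp [hABd] at this
      have hsum : {w | w ∈ A ∧ G.Adj v w}.ncard + {w | w ∈ B ∧ G.Adj v w}.ncard ≤ 5 := by
        rw [← Set.ncard_union_eq hdisj (Set.toFinite _) (Set.toFinite _)]
        exact le_trans (Set.ncard_le_ncard hsplit (Set.toFinite _)) hdeg
      have hSS : insert v S' = S := by
        rw [hS', Set.insert_diff_singleton, Set.insert_eq_self.2 hvS]
      by_cases hle : {w | w ∈ A ∧ G.Adj v w}.ncard ≤ 2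
      · refine ⟨insert v A, B, ?_, ?_, stmt10Good_insert G hGA hle, hGB⟩
        · rw [Set.insert_union, hAB, hSS]
        · rw [Set.insert_inter_of_notMem hvB, hABd]
      · have hle' : {w | w ∈ B ∧ G.Adj v w}.ncard ≤ 2 := by omega
        refine ⟨A, insert v B, ?_, ?_, hGA, stmt10Good_insert G hGB hle'⟩
        · rw [Set.union_insert, hAB, hSS]
        · rw [Set.inter_insert_of_notMem hvA, hABd]

/-- Every finite simple `5`-degenerate graph (every nonempty vertex set
`S` contains a vertex with at most `5` neighbours in `S`) admits a partition of its
vertex set into two sets each inducing a `2`-degenerate subgraph. -/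
theorem stmt10 {V : Type*} [Fintype V] (G : SimpleGraph V)
    (h5 : ∀ S : Set V, S.Nonempty → ∃ v ∈ S, {w | w ∈ S ∧ G.Adj v w}.ncard ≤ 5) :
    ∃ V₁ V₂ : Set V, V₁ ∪ V₂ = Set.univ ∧ V₁ ∩ V₂ = ∅ ∧
      (∀ S ⊆ V₁, S.Nonempty → ∃ v ∈ S, {w | w ∈ S ∧ G.Adj v w}.ncard ≤ 2) ∧
      (∀ S ⊆ V₂, S.Nonempty → ∃ v ∈ S, {w | w ∈ S ∧ G.Adj v w}.ncard ≤ 2) := by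
  obtain ⟨A, B, h1, h2, h3, h4⟩ :=
    stmt10_main G h5 (Set.univ : Set V).ncard Set.univ le_rfl
  exact ⟨A, B, h1, h2, h3, h4⟩
end
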